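/- (Poincaré–Hopf) Let G be a finite abstract simplicial complex with vertex set V(G) and let f : V(G) → ℤ be locally injective. Then χ(G) = Σ_{v ∈ V(G)} i_f(v), where i_f(v) = Σ w(x) over all simplices x ∈ G containing v on which f attains its maximum at v. -/
import Mathlib


open Finset Polynomial

namespace SphereFormula

variable {V : Type} [DecidableEq V]

/-- A finite abstract simplicial complex: a finite collection of nonempty finite sets
that is closed under taking nonempty subsets. -/
def IsComplex (G : Finset (Finset V)) : Prop :=
  ∀ x ∈ G, x.Nonempty ∧ ∀ y, y ⊆ x → y.Nonempty → y ∈ G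

/-- `w x = (-1)^(dim x)` where `dim x = |x| - 1`. -/
def w (x : Finset V) : ℤ := (-1) ^ (x.card - 1)

/-- Euler characteristic of a finite set of simplices: `χ(A) = Σ_{x ∈ A} w x`. -/
def chi (A : Finset (Finset V)) : ℤ := ∑ x ∈ A, w x

/-- The star `U(x) = {y ∈ G : x ⊆ y}`. -/
def star (G : Finset (Finset V)) (x : Finset V) : Finset (Finset V) :=
  G.filter fun y => x ⊆ y

/-- The unit ball `B(x) = {z ∈ G : z ⊆ y for some y ∈ U(x)}` (closure of the star). -/
def ball (G : Finset (Finset V)) (x : Finset V) : Finset (Finset V) :=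
  G.filter fun z => ∃ y ∈ G, x ⊆ y ∧ z ⊆ y

/-- The unit sphere `S(x) = B(x) \ U(x)`. -/
def sphere (G : Finset (Finset V)) (x : Finset V) : Finset (Finset V) :=
  ball G x \ star G x

/-- The vertex set of `G`: those `v` with `{v} ∈ G`. -/
def verts (G : Finset (Finset V)) : Finset V :=
  (G.biUnion id).filter fun v => {v} ∈ G

/-- Contractibility, defined inductively: a single vertex complex is contractible, and `G`
is contractible if there is `x ∈ G` with both `S(x)` and `G \ U(x)` contractible. -/
inductive Contractible : Finset (Finset V) → Prop where
  | point (v : V) : Contractible ({({v} : Finset V)} : Finset (Finset V))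
  | step (G : Finset (Finset V)) (x : Finset V) (hx : x ∈ G)
      (hS : Contractible (sphere G x)) (hG : Contractible (G \ star G x)) :
      Contractible G

mutual
  /-- `G` is a `d`-manifold (`d ≥ 0`): every unit sphere `S(x)` is a `(d-1)`-sphere. -/
  inductive IsManifold : ℤ → Finset (Finset V) → Prop where
    | mk (d : ℤ) (G : Finset (Finset V)) (hd : 0 ≤ d)
        (h : ∀ x ∈ G, IsSphere (d - 1) (sphere G x)) : IsManifold d G

  /-- `d`-spheres: the empty complex is the `(-1)`-sphere, and a `d`-sphere is a
  `d`-manifold `G` such that `G \ U(x)` is contractible for some `x ∈ G`. -/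
  inductive IsSphere : ℤ → Finset (Finset V) → Prop where
    | empty : IsSphere (-1) (∅ : Finset (Finset V))
    | mk (d : ℤ) (G : Finset (Finset V)) (hm : IsManifold d G)
        (h : ∃ x ∈ G, Contractible (G \ star G x)) : IsSphere d G
end

/-- The f-function `f_G(t) = 1 + Σ_{k ≥ 0} f_k(G) t^(k+1) = 1 + Σ_{x ∈ G} t^|x|`. -/
noncomputable def fPoly (G : Finset (Finset V)) : Polynomial ℚ :=
  1 + ∑ x ∈ G, Polynomial.X ^ x.card

/-- `F_H(t) = ∫_0^t f_H(s) ds = t + Σ_{k ≥ 0} f_k(H) t^(k+2)/(k+2)`. -/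
noncomputable def FPoly (H : Finset (Finset V)) : Polynomial ℚ :=
  Polynomial.X +
    ∑ x ∈ H, Polynomial.C (((x.card : ℚ) + 1)⁻¹) * Polynomial.X ^ (x.card + 1)

/-- The join `G + H = G ∪ H ∪ {x ∪ y : x ∈ G, y ∈ H}`. -/
def joinC (G H : Finset (Finset V)) : Finset (Finset V) :=
  G ∪ H ∪ (G ×ˢ H).image fun p => p.1 ∪ p.2

/-- The barycentric refinement: simplices are the nonempty chains in `(G, ⊆)`. -/
def bary (G : Finset (Finset V)) : Finset (Finset (Finset V)) :=
  G.powerset.filter fun c => c.Nonempty ∧ ∀ x ∈ c, ∀ y ∈ c, x ⊆ y ∨ y ⊆ x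

/-- `f` is locally injective: distinct vertices of a common simplex have distinct values. -/
def LocallyInjective (G : Finset (Finset V)) (f : V → ℤ) : Prop :=
  ∀ x ∈ G, ∀ v ∈ x, ∀ u ∈ x, v ≠ u → f v ≠ f u

/-- Poincaré–Hopf: for a locally injective `f : V(G) → ℤ`,
`χ(G) = Σ_{v ∈ V(G)} i_f(v)` where `i_f(v) = Σ_{x ∈ G, v ∈ x, f(v) = max_{u ∈ x} f(u)} w(x)`. -/
theorem poincare_hopf {V : Type} [DecidableEq V] (G : Finset (Finset V))
    (hG : IsComplex G) (f : V → ℤ) (hf : LocallyInjective G f) :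
    chi G = ∑ v ∈ verts G,
      ∑ x ∈ G.filter (fun x => v ∈ x ∧ ∀ u ∈ x, f u ≤ f v), w x := by
  classical
  have : ∑ v ∈ verts G, ∑ x ∈ G.filter (fun x => v ∈ x ∧ ∀ u ∈ x, f u ≤ f v), w x
      = ∑ x ∈ G, ∑ v ∈ verts G,
          if v ∈ x ∧ ∀ u ∈ x, f u ≤ f v then w x else 0 := by
    simp only [Finset.sum_filter]
    rw [Finset.sum_comm]
  rw [this, chi]
  refine Finset.sum_congr rfl fun x hx => ?_
  obtain ⟨hne, hclosed⟩ := hG x hx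
  obtain ⟨v0, hv0x, hv0max⟩ := Finset.exists_max_image x f hne
  have hv0verts : v0 ∈ verts G := by
    simp only [verts, Finset.mem_filter, Finset.mem_biUnion, id]
    exact ⟨⟨x, hx, hv0x⟩, hclosed {v0} (Finset.singleton_subset_iff.2 hv0x)
      (Finset.singleton_nonempty v0)⟩
  rw [Finset.sum_eq_single_of_mem v0 hv0verts]
  · simp only [hv0x, true_and]; exact (if_pos hv0max).symm
  · intro u _ hu
    have : ¬(u ∈ x ∧ ∀ w ∈ x, f w ≤ f u) := by
      rintro ⟨hux, humax⟩
      exact hf x hx v0 hv0x u hux (fun h => hu h.symm)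
        (le_antisymm (humax v0 hv0x) (hv0max u hux))
    simp [this]

end SphereFormula
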